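/- Let $R = k[x_1,\dots,x_m]$ and $I$ a monomial ideal. Then for all $s \ge 1$, $\partial^*(I^s) = \partial^*(I) I^{s-1}$. -/

import Mathlib

open MvPolynomial

variable {m : ℕ} {k : Type*}

/-- An ideal of `k[x_1, …, x_m]` is a monomial ideal if it is generated by monomials. -/
def IsMonomialIdeal [Field k] (I : Ideal (MvPolynomial (Fin m) k)) : Prop :=
  ∃ S : Set (Fin m →₀ ℕ), I = Ideal.span ((fun e => monomial e (1 : k)) '' S)

/-- `e` is the exponent vector of a minimal monomial generator of `I`: the monomial `x^e`
lies in `I` and no proper divisor of it lies in `I`. -/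
def IsMinMonomialGen [Field k] (I : Ideal (MvPolynomial (Fin m) k)) (e : Fin m →₀ ℕ) : Prop :=
  monomial e (1 : k) ∈ I ∧ ∀ e' : Fin m →₀ ℕ, e' ≤ e → e' ≠ e → monomial e' (1 : k) ∉ I

/-- `∂*(I)`: the ideal generated by all quotients `f / x_i`, where `f` runs over the minimal
monomial generators of `I` and `x_i` over the variables dividing `f`. -/
noncomputable def partialStar [Field k] (I : Ideal (MvPolynomial (Fin m) k)) :
    Ideal (MvPolynomial (Fin m) k) :=
  Ideal.span { p | ∃ (e : Fin m →₀ ℕ) (i : Fin m), IsMinMonomialGen I e ∧ e i ≠ 0 ∧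
    p = monomial (e - Finsupp.single i 1) (1 : k) }

/-!
A minimal generator of `I * J` is a product `x^a x^b` of minimal generators of the monomial ideals
`I` and `J`, so dividing it by a variable divides one of the two factors:
`∂*(I J) ≤ ∂*(I) J + I ∂*(J)`, whence `∂*(I^(n+1)) ≤ ∂*(I) I^n` by induction. Conversely, for a
proper ideal `L` containing `x^e`, pick a minimal generator `x^e'` of `L` dividing `x^e`; then
`x^e' / x_j` divides `x^e / x_i` for `j = i` if `x_i ∣ x^e'`, and for any `x_j ∣ x^e'` otherwise
(here `x^e / x_i` is `x^(e - single i 1)` with truncated subtraction, so it is `x^e` if `x_i ∤ x^e`).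
So `x^e / x_i ∈ ∂*(L)`, and with `x^e = x^a x^b`, `x^a` a minimal generator of `I` and `x^b ∈ J`,
this gives `∂*(I) J ≤ ∂*(I J)`.
-/

open Pointwise

namespace MvPolynomial

variable {σ R : Type*} [CommSemiring R]

theorem monomial_one_mul_monomial_one (a b : σ →₀ ℕ) :
    monomial a (1 : R) * monomial b 1 = monomial (a + b) 1 := by
  rw [monomial_mul, one_mul]

theorem monomial_one_mem_of_le [Nontrivial R] {L : Ideal (MvPolynomial σ R)} {a b : σ →₀ ℕ}
    (hab : a ≤ b) (ha : monomial a (1 : R) ∈ L) : monomial b (1 : R) ∈ L :=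
  L.mem_of_dvd (monomial_one_dvd_monomial_one.2 hab) ha

theorem span_monomial_image_mul (S T : Set (σ →₀ ℕ)) :
    Ideal.span ((fun e => monomial e (1 : R)) '' S) * Ideal.span ((fun e => monomial e 1) '' T) =
      Ideal.span ((fun e => monomial e 1) '' (S + T)) := by
  rw [Ideal.span_mul_span', ← Set.image2_mul, ← Set.image2_add (s := S) (t := T),
    Set.image_image2_distrib (g := fun e => monomial e (1 : R))
      fun a b => (monomial_one_mul_monomial_one a b).symm]

end MvPolynomial

theorem Finsupp.add_tsub_single_of_ne_zero {ι : Type*} {a c : ι →₀ ℕ} {i : ι} (hi : a i ≠ 0) :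
    a + c - single i 1 = a - single i 1 + c :=
  (tsub_add_eq_add_tsub (single_le_iff.2 (Nat.one_le_iff_ne_zero.2 hi))).symm

section

variable [Field k] {I J L : Ideal (MvPolynomial (Fin m) k)}

theorem IsMonomialIdeal.mul (hI : IsMonomialIdeal I) (hJ : IsMonomialIdeal J) :
    IsMonomialIdeal (I * J) := by
  obtain ⟨S, rfl⟩ := hI
  obtain ⟨T, rfl⟩ := hJ
  exact ⟨S + T, span_monomial_image_mul S T⟩

theorem IsMonomialIdeal.pow (hI : IsMonomialIdeal I) :
    ∀ n : ℕ, IsMonomialIdeal (I ^ n)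
  | 0 => ⟨{0}, by simp⟩
  | n + 1 => by rw [pow_succ]; exact (hI.pow n).mul hI

theorem IsMonomialIdeal.exists_add_le_of_mem_mul (hI : IsMonomialIdeal I) (hJ : IsMonomialIdeal J)
    {e : Fin m →₀ ℕ}
    (he : monomial e (1 : k) ∈ I * J) :
    ∃ a b, monomial a (1 : k) ∈ I ∧ monomial b (1 : k) ∈ J ∧ a + b ≤ e := by
  obtain ⟨S, rfl⟩ := hI
  obtain ⟨T, rfl⟩ := hJ
  rw [span_monomial_image_mul, mem_ideal_span_monomial_image] at he
  obtain ⟨_, ⟨a, ha, b, hb, rfl⟩, hle⟩ := he e (by simp)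
  exact ⟨a, b, Ideal.subset_span ⟨a, ha, rfl⟩, Ideal.subset_span ⟨b, hb, rfl⟩, hle⟩

section IsMinMonomialGen

variable {e : Fin m →₀ ℕ}

theorem exists_isMinMonomialGen_le (he : monomial e (1 : k) ∈ L) :
    ∃ e' ≤ e, IsMinMonomialGen L e' := by
  induction e using WellFoundedLT.induction with
  | _ e ih =>
    by_cases hmin : ∀ e' ≤ e, e' ≠ e → monomial e' (1 : k) ∉ L
    · exact ⟨e, le_rfl, he, hmin⟩
    · push Not at hmin
      obtain ⟨e', hle, hne, hmem⟩ := hmin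
      obtain ⟨e'', hle', hmin'⟩ := ih e' (lt_of_le_of_ne hle hne) hmem
      exact ⟨e'', hle'.trans hle, hmin'⟩

theorem IsMinMonomialGen.eq_of_le (h : IsMinMonomialGen L e) {e' : Fin m →₀ ℕ} (hle : e' ≤ e)
    (he' : monomial e' (1 : k) ∈ L) : e' = e :=
  by_contra fun hne => h.2 e' hle hne he'

theorem IsMinMonomialGen.ne_top (h : IsMinMonomialGen L e) (he : e ≠ 0) : L ≠ ⊤ :=
  fun hL => h.2 0 (zero_le (a := e)) he.symm (hL ▸ Submodule.mem_top)

theorem IsMinMonomialGen.ne_zero (h : IsMinMonomialGen L e) (hL : L ≠ ⊤) : e ≠ 0 := by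
  rintro rfl
  exact hL (L.eq_top_of_isUnit_mem h.1 (by simp))

theorem IsMinMonomialGen.monomial_sub_single_mem_partialStar (h : IsMinMonomialGen L e) {i : Fin m}
    (hi : e i ≠ 0) : monomial (e - Finsupp.single i 1) (1 : k) ∈ partialStar L :=
  Ideal.subset_span ⟨e, i, h, hi, rfl⟩

theorem monomial_sub_single_mem_partialStar (hL : L ≠ ⊤) (he : monomial e (1 : k) ∈ L)
    (i : Fin m) :
    monomial (e - Finsupp.single i 1) (1 : k) ∈ partialStar L := by
  obtain ⟨e', hle, hmin⟩ := exists_isMinMonomialGen_le he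
  by_cases he'i : e' i = 0
  · obtain ⟨j, hj⟩ := Finsupp.ne_iff.1 (hmin.ne_zero hL)
    have hle' : e' ≤ e - Finsupp.single i 1 := fun l => by
      rcases eq_or_ne i l with rfl | hil
      · simp [he'i]
      · simpa [Finsupp.single_apply, hil] using hle l
    exact monomial_one_mem_of_le (tsub_le_self.trans hle')
      (hmin.monomial_sub_single_mem_partialStar hj)
  · exact monomial_one_mem_of_le (tsub_le_tsub_right hle _)
      (hmin.monomial_sub_single_mem_partialStar he'i)

end IsMinMonomialGen

theorem partialStar_mul_le (hJ : IsMonomialIdeal J) : partialStar L * J ≤ partialStar (L * J) := by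
  obtain ⟨T, hT⟩ := hJ
  conv_lhs => rw [partialStar, hT]
  rw [Ideal.span_mul_span', Ideal.span_le]
  rintro _ ⟨_, ⟨e, i, hmin, hi, rfl⟩, _, ⟨t, ht, rfl⟩, rfl⟩
  have hLJ : L * J ≠ ⊤ :=
    ne_top_of_le_ne_top (hmin.ne_top (Finsupp.ne_iff.2 ⟨i, hi⟩)) Ideal.mul_le_left
  have hmem : monomial (e + t) (1 : k) ∈ L * J := by
    rw [← monomial_one_mul_monomial_one]
    exact Ideal.mul_mem_mul hmin.1 (hT ▸ Ideal.subset_span ⟨t, ht, rfl⟩)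
  beta_reduce
  rw [monomial_one_mul_monomial_one, ← Finsupp.add_tsub_single_of_ne_zero hi]
  exact monomial_sub_single_mem_partialStar hLJ hmem i

theorem partialStar_mul_le_add (hI : IsMonomialIdeal I) (hJ : IsMonomialIdeal J) :
    partialStar (I * J) ≤ partialStar I * J + I * partialStar J := by
  rw [partialStar, Ideal.span_le]
  rintro _ ⟨e, i, hmin, hi, rfl⟩
  obtain ⟨a, b, ha, hb, hab⟩ := hI.exists_add_le_of_mem_mul hJ hmin.1
  obtain ⟨a', ha'a, ha'⟩ := exists_isMinMonomialGen_le ha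
  obtain ⟨b', hb'b, hb'⟩ := exists_isMinMonomialGen_le hb
  have ha'b' : monomial (a' + b') (1 : k) ∈ I * J := by
    rw [← monomial_one_mul_monomial_one]
    exact Ideal.mul_mem_mul ha'.1 hb'.1
  obtain rfl : a' + b' = e := hmin.eq_of_le ((add_le_add ha'a hb'b).trans hab) ha'b'
  by_cases ha'i : a' i = 0
  · have hb'i : b' i ≠ 0 := by simpa [ha'i] using hi
    rw [SetLike.mem_coe, add_comm a', Finsupp.add_tsub_single_of_ne_zero hb'i, add_comm _ a',
      ← monomial_one_mul_monomial_one]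
    exact Ideal.mem_sup_right
      (Ideal.mul_mem_mul ha'.1 (hb'.monomial_sub_single_mem_partialStar hb'i))
  · rw [SetLike.mem_coe, Finsupp.add_tsub_single_of_ne_zero ha'i, ← monomial_one_mul_monomial_one]
    exact Ideal.mem_sup_left
      (Ideal.mul_mem_mul (ha'.monomial_sub_single_mem_partialStar ha'i) hb'.1)

theorem partialStar_pow_succ_le (hI : IsMonomialIdeal I) :
    ∀ n : ℕ, partialStar (I ^ (n + 1)) ≤ partialStar I * I ^ n
  | 0 => by simp
  | n + 1 =>
    calc partialStar (I ^ (n + 2))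
        ≤ partialStar I * I ^ (n + 1) + I * partialStar (I ^ (n + 1)) := by
          rw [pow_succ' I (n + 1)]; exact partialStar_mul_le_add hI (hI.pow _)
      _ ≤ partialStar I * I ^ (n + 1) + I * (partialStar I * I ^ n) := by
          gcongr; exact partialStar_pow_succ_le hI n
      _ = partialStar I * I ^ (n + 1) := by
          rw [mul_left_comm, ← pow_succ', Submodule.add_eq_sup, sup_idem]

end

/-- For a monomial ideal `I` of `k[x_1, …, x_m]` and `s ≥ 1`,
`∂*(I^s) = ∂*(I) I^(s-1)`. -/
theorem partialStar_pow [Field k] (I : Ideal (MvPolynomial (Fin m) k))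
    (hmon : IsMonomialIdeal I) (s : ℕ) (hs : 1 ≤ s) :
    partialStar (I ^ s) = partialStar I * I ^ (s - 1) := by
  obtain ⟨n, rfl⟩ : ∃ n, s = n + 1 := ⟨s - 1, by omega⟩
  rw [Nat.add_sub_cancel]
  refine le_antisymm (partialStar_pow_succ_le hmon n) ?_
  rw [pow_succ']
  exact partialStar_mul_le (hmon.pow n)
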